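/- Let Ω ∈ ℝ^{p×p} be nonnegative with all row sums at most ρ < 1, and define for b > 0 and constants c₁, c₂, r > 0 a matrix η with max_j (η J)_j ≤ c₂ exp(-c₂' b^r). Then for the choice b = C u^{1/(r+1)} (C an appropriate constant), the quantity 2v ρ^{⌊u/b⌋+1} + 2v·max_j(ηJ)_j·ρ/(1-ρ) is bounded above by a₁ v exp(-a₂ u^{r/(r+1)}) for all u ≥ 0, for constants a₁, a₂ depending only on ρ, c₂, c₂', r. -/

import Mathlib

open Real

/-! Take `C = 1`, so `b = u^{1/(r+1)}`. Then `u / b` and `b ^ r` both equal `t = u^{r/(r+1)}`: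
the geometric term is `ρ^{⌊t⌋₊+1} ≤ ρ^t = exp (log ρ · t)` and the tail term is at most
`c₂ exp (-c₂' t)`, so both decay like `exp (-a₂ t)` with `a₂ = min (-log ρ) c₂'`. -/

theorem div_rpow_one_div_add_one {u r : ℝ} (hu : 0 ≤ u) (hr : 0 < r) :
    u / u ^ (1 / (r + 1)) = u ^ (r / (r + 1)) := by
  rcases hu.eq_or_lt with rfl | hu
  · rw [zero_div, zero_rpow (by positivity)]
  · have hexp : 1 - 1 / (r + 1) = r / (r + 1) := by field_simp; ring
    rw [← hexp, rpow_one_sub' hu.le (by rw [hexp]; positivity)]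

theorem rpow_one_div_add_one_rpow {u : ℝ} (hu : 0 ≤ u) (r : ℝ) :
    (u ^ (1 / (r + 1))) ^ r = u ^ (r / (r + 1)) := by
  rw [← rpow_mul hu, one_div_mul_eq_div]

theorem pow_floor_add_one_le_exp {ρ a t : ℝ} (hρ0 : 0 < ρ) (hρ1 : ρ ≤ 1)
    (ha : a ≤ -log ρ) (ht : 0 ≤ t) : ρ ^ (⌊t⌋₊ + 1) ≤ exp (-a * t) :=
  calc ρ ^ (⌊t⌋₊ + 1) = ρ ^ ((⌊t⌋₊ + 1 : ℕ) : ℝ) := (rpow_natCast ρ _).symm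
    _ ≤ ρ ^ t := by
      refine rpow_le_rpow_of_exponent_ge hρ0 hρ1 ?_
      push_cast
      exact (Nat.lt_floor_add_one t).le
    _ = exp (log ρ * t) := rpow_def_of_pos hρ0 t
    _ ≤ exp (-a * t) := by gcongr; linarith

theorem stmt_7_general (ρ c₂ c₂' r v : ℝ) (hρ0 : 0 < ρ) (hρ1 : ρ < 1)
    (hc₂ : 0 < c₂) (hc₂' : 0 < c₂') (hr : 0 < r) (hv : 0 < v)
    (m : ℝ → ℝ)
    (hm : ∀ b, 0 ≤ b → m b ≤ c₂ * Real.exp (-c₂' * b ^ r)) :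
    ∃ C a₁ a₂ : ℝ, 0 < C ∧ 0 < a₁ ∧ 0 < a₂ ∧
      ∀ u : ℝ, 0 ≤ u →
        2 * v * ρ ^ (⌊u / (C * u ^ ((1 : ℝ) / (r + 1)))⌋₊ + 1) +
            2 * v * m (C * u ^ ((1 : ℝ) / (r + 1))) * ρ / (1 - ρ) ≤
          a₁ * v * Real.exp (-a₂ * u ^ (r / (r + 1))) := by
  have h1ρ : 0 < 1 - ρ := sub_pos.mpr hρ1
  have hlog : 0 < -log ρ := neg_pos.mpr (log_neg hρ0 hρ1)
  obtain ⟨a₂, ha₂, ha₂ρ, ha₂c⟩ : ∃ a₂, 0 < a₂ ∧ a₂ ≤ -log ρ ∧ a₂ ≤ c₂' :=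
    ⟨min (-log ρ) c₂', lt_min hlog hc₂', min_le_left _ _, min_le_right _ _⟩
  refine ⟨1, 2 + 2 * c₂ * ρ / (1 - ρ), a₂, one_pos, by positivity, ha₂, fun u hu => ?_⟩
  set t := u ^ (r / (r + 1))
  have ht : 0 ≤ t := rpow_nonneg hu _
  have hgeom : ρ ^ (⌊u / (1 * u ^ (1 / (r + 1)))⌋₊ + 1) ≤ exp (-a₂ * t) := by
    rw [one_mul, div_rpow_one_div_add_one hu hr]
    exact pow_floor_add_one_le_exp hρ0 hρ1.le ha₂ρ ht
  have htail : m (1 * u ^ (1 / (r + 1))) ≤ c₂ * exp (-a₂ * t) := by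
    rw [one_mul]
    calc m (u ^ (1 / (r + 1))) ≤ c₂ * exp (-c₂' * t) := by
          simpa only [rpow_one_div_add_one_rpow hu r] using
            hm (u ^ (1 / (r + 1))) (rpow_nonneg hu _)
      _ ≤ c₂ * exp (-a₂ * t) := by gcongr
  calc 2 * v * ρ ^ (⌊u / (1 * u ^ (1 / (r + 1)))⌋₊ + 1)
        + 2 * v * m (1 * u ^ (1 / (r + 1))) * ρ / (1 - ρ)
      ≤ 2 * v * exp (-a₂ * t)
        + 2 * v * (c₂ * exp (-a₂ * t)) * ρ / (1 - ρ) := by gcongr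
    _ = (2 + 2 * c₂ * ρ / (1 - ρ)) * v * exp (-a₂ * t) := by ring

/-- With the truncation level chosen as `b = C u^{1/(r+1)}`, the bound
`2vρ^{⌊u/b⌋+1} + 2v max_j(ηJ)_j ρ/(1-ρ)` decays as `a₁ v exp(-a₂ u^{r/(r+1)})`. -/
theorem stmt_7 (ρ c₂ c₂' r v : ℝ) (hρ0 : 0 < ρ) (hρ1 : ρ < 1)
    (hc₂ : 0 < c₂) (hc₂' : 0 < c₂') (hr : 0 < r) (hv : 0 < v)
    (m : ℝ → ℝ) (hm0 : ∀ b, 0 ≤ m b)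
    (hm : ∀ b, 0 ≤ b → m b ≤ c₂ * Real.exp (-c₂' * b ^ r)) :
    ∃ C a₁ a₂ : ℝ, 0 < C ∧ 0 < a₁ ∧ 0 < a₂ ∧
      ∀ u : ℝ, 0 ≤ u →
        2 * v * ρ ^ (⌊u / (C * u ^ ((1 : ℝ) / (r + 1)))⌋₊ + 1) +
            2 * v * m (C * u ^ ((1 : ℝ) / (r + 1))) * ρ / (1 - ρ) ≤
          a₁ * v * Real.exp (-a₂ * u ^ (r / (r + 1))) :=
  stmt_7_general ρ c₂ c₂' r v hρ0 hρ1 hc₂ hc₂' hr hv m hm
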